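/- arXiv:2203.07808 — 2 statements merged into one kernel-verified Lean document; each statement's English description precedes it below -/
import Mathlib

section
/- Let m, n, s be natural numbers with 1 < m ≤ M, 0 < s < m·n, and let the entries of the random matrix U ∈ ℝ^{m×n} be i.i.d. standard Gaussian N(0,1). Let ε₁ = inf over all F ∈ ℝ^{m×M} and R ∈ ℝ^{M×n} with ‖R‖₀ ≤ s of ‖U − F·R‖_F, and let ε₂ = min over all Φ̄ ∈ ℝ^{m×n} with ‖Φ̄‖₀ ≤ s of ‖U − Φ̄‖_F. Then ε₁ < ε₂ holds with probability 1. -/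
open MeasureTheory ProbabilityTheory

/-- Number of nonzero entries of a real matrix (the ℓ₀ "norm"). -/
noncomputable def l0 {m n : ℕ} (A : Matrix (Fin m) (Fin n) ℝ) : ℕ :=
  (Finset.univ.filter fun p : Fin m × Fin n => A p.1 p.2 ≠ 0).card

/-- Frobenius norm of a real matrix. -/
noncomputable def frobNorm {m n : ℕ} (A : Matrix (Fin m) (Fin n) ℝ) : ℝ :=
  Real.sqrt (∑ i, ∑ j, (A i j) ^ 2)

/-- The random matrix built from i.i.d. coordinates. -/
def U0 (m n : ℕ) (ω : (Fin m × Fin n) → ℝ) : Matrix (Fin m) (Fin n) ℝ :=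
  Matrix.of fun i j => ω (i, j)

lemma gauss_singleton (c : ℝ) : gaussianReal 0 1 {c} = 0 := by
  rw [gaussianReal_of_var_ne_zero _ one_ne_zero,
    withDensity_apply _ (measurableSet_singleton c)]
  rw [setLIntegral_measure_zero _ _ (Real.volume_singleton)]


lemma pi_eval_null {ι : Type*} [Fintype ι] [DecidableEq ι] (i0 : ι) (c : ℝ) :
    Measure.pi (fun _ : ι => gaussianReal 0 1) {y : ι → ℝ | y i0 = c} = 0 := by
  have h : {y : ι → ℝ | y i0 = c} =
      Set.pi Set.univ (fun i => if i = i0 then {c} else Set.univ) := by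
    ext y
    simp only [Set.mem_setOf_eq, Set.mem_pi, Set.mem_univ, forall_true_left]
    constructor
    · intro hy i
      by_cases hi : i = i0 <;> simp [hi, hy]
    · intro hy
      have := hy i0
      simpa using this
  rw [h, Measure.pi_pi]
  refine Finset.prod_eq_zero (Finset.mem_univ i0) ?_
  simp [gauss_singleton]

lemma nullC {ι : Type*} [Fintype ι] [DecidableEq ι] (p0 q0 : ι) (hpq : q0 ≠ p0)
    (g : (ι → ℝ) → ℝ) (hg : Measurable g)
    (hg' : ∀ ω ω' : ι → ℝ, (∀ i, i ≠ p0 → ω i = ω' i) → g ω = g ω') :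
    Measure.pi (fun _ : ι => gaussianReal 0 1) {ω | ω p0 * ω q0 + g ω = 0} = 0 := by
  classical
  set μ : ι → Measure ℝ := fun _ => gaussianReal 0 1 with hμ
  have : ∀ i, IsProbabilityMeasure (μ i) := fun _ => inferInstance
  set P : ι → Prop := fun i => i ≠ p0 with hP
  set e := MeasurableEquiv.piEquivPiSubtypeProd (fun _ : ι => ℝ) P with he
  have mp := MeasureTheory.measurePreserving_piEquivPiSubtypeProd μ P
  set S : Set (ι → ℝ) := {ω | ω p0 * ω q0 + g ω = 0} with hS
  have hSm : MeasurableSet S := by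
    have : Measurable fun ω : ι → ℝ => ω p0 * ω q0 + g ω :=
      ((measurable_pi_apply p0).mul (measurable_pi_apply q0)).add hg
    exact this (measurableSet_singleton 0)
  set t : Set ((∀ _ : Subtype P, ℝ) × (∀ _ : {i // ¬ P i}, ℝ)) := e.symm ⁻¹' S with ht
  have htm : MeasurableSet t := e.symm.measurable hSm
  have hpre : e ⁻¹' t = S := by
    ext ω; simp [ht, Set.mem_preimage]
  have key : Measure.pi μ S = ((Measure.pi fun i : Subtype P => μ i).prod
      (Measure.pi fun i : {i // ¬ P i} => μ i)) t := by
    rw [← hpre]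
    exact mp.measure_preimage htm.nullMeasurableSet
  rw [key, Measure.measure_prod_null htm]
  have hq0 : P q0 := hpq
  have hp0 : ¬ P p0 := by simp [hP]
  have hae : ∀ᵐ x ∂(Measure.pi fun i : Subtype P => μ i), x ⟨q0, hq0⟩ ≠ 0 := by
    rw [ae_iff]
    have : {x : ∀ _ : Subtype P, ℝ | ¬ x ⟨q0, hq0⟩ ≠ 0} = {x | x ⟨q0, hq0⟩ = 0} := by
      ext x; simp
    rw [this]
    exact pi_eval_null _ 0
  filter_upwards [hae] with x hx
  have hsub : Prod.mk x ⁻¹' t ⊆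
      {y : ∀ _ : {i // ¬ P i}, ℝ | y ⟨p0, hp0⟩ = -(g (e.symm (x, fun _ => 0))) / x ⟨q0, hq0⟩} := by
    intro y hy
    simp only [ht, Set.mem_preimage, hS, Set.mem_setOf_eq] at hy
    have h1 : (e.symm (x, y)) p0 = y ⟨p0, hp0⟩ := by
      simp [he, MeasurableEquiv.piEquivPiSubtypeProd, Equiv.piEquivPiSubtypeProd, hp0]
    have h2 : (e.symm (x, y)) q0 = x ⟨q0, hq0⟩ := by
      simp only [he, MeasurableEquiv.piEquivPiSubtypeProd, Equiv.piEquivPiSubtypeProd,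
        MeasurableEquiv.symm, MeasurableEquiv.coe_mk, Equiv.coe_fn_symm_mk]
      rw [dif_pos hq0]
    have h3 : g (e.symm (x, y)) = g (e.symm (x, fun _ => 0)) := by
      apply hg'
      intro i hi
      have hPi : P i := hi
      simp only [he, MeasurableEquiv.piEquivPiSubtypeProd, Equiv.piEquivPiSubtypeProd,
        MeasurableEquiv.symm, MeasurableEquiv.coe_mk, Equiv.coe_fn_symm_mk]
      rw [dif_pos hPi, dif_pos hPi]
    rw [h1, h2, h3] at hy
    simp only [Set.mem_setOf_eq]
    field_simp
    linarith [hy]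
  exact measure_mono_null hsub (pi_eval_null _ _)

lemma null_poly {m n : ℕ} (T : Finset (Fin m × Fin n)) (a k : Fin m) (j0 : Fin n)
    (ha : (a, j0) ∉ T) (hk : (k, j0) ∈ T) :
    Measure.pi (fun _ : Fin m × Fin n => gaussianReal 0 1)
      {ω : (Fin m × Fin n) → ℝ | (∑ j : Fin n,
        (if (a, j) ∈ T then (0:ℝ) else ω (a, j)) * (if (k, j) ∈ T then ω (k, j) else 0)) = 0}
      = 0 := by
  classical
  have hka : k ≠ a := fun h => ha (h ▸ hk)
  set g : ((Fin m × Fin n) → ℝ) → ℝ := fun ω => ∑ j ∈ Finset.univ.erase j0,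
    (if (a, j) ∈ T then (0:ℝ) else ω (a, j)) * (if (k, j) ∈ T then ω (k, j) else 0) with hgdef
  have hsum : ∀ ω : (Fin m × Fin n) → ℝ, (∑ j : Fin n,
      (if (a, j) ∈ T then (0:ℝ) else ω (a, j)) * (if (k, j) ∈ T then ω (k, j) else 0))
      = ω (a, j0) * ω (k, j0) + g ω := by
    intro ω
    rw [← Finset.add_sum_erase _ _ (Finset.mem_univ j0)]
    rw [if_neg ha, if_pos hk]
  have h1 : {ω : (Fin m × Fin n) → ℝ | (∑ j : Fin n,
        (if (a, j) ∈ T then (0:ℝ) else ω (a, j)) * (if (k, j) ∈ T then ω (k, j) else 0)) = 0}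
      = {ω | ω (a, j0) * ω (k, j0) + g ω = 0} := by
    ext ω; simp only [Set.mem_setOf_eq, hsum]
  rw [h1]
  refine nullC (a, j0) (k, j0) (by simp [hka]) g ?_ ?_
  · apply Finset.measurable_sum
    intro j _
    by_cases h1 : (a, j) ∈ T <;> by_cases h2 : (k, j) ∈ T <;>
      simp [h1, h2] <;> fun_prop
  · intro ω ω' hωω'
    refine Finset.sum_congr rfl fun j hj => ?_
    have hj0 : j ≠ j0 := (Finset.mem_erase.1 hj).1
    rw [hωω' (a, j) (by simp [hj0]), hωω' (k, j) (by simp [Prod.ext_iff]; intro h; exact absurd h hka)]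

lemma key2A (m n M s : ℕ) (hm : 1 < m) (hmM : m ≤ M) (hs0 : 0 < s) (hs : s < m * n)
    (ω : (Fin m × Fin n) → ℝ)
    (h1 : ∀ p, ω p ≠ 0)
    (T : Finset (Fin m × Fin n)) (hTcard : T.card = s)
    (a k : Fin m) (j0 : Fin n) (haj : (a, j0) ∉ T) (hkj : (k, j0) ∈ T)
    (hc0 : (∑ j : Fin n, (if (a, j) ∈ T then (0:ℝ) else ω (a, j)) *
        (if (k, j) ∈ T then ω (k, j) else 0)) ≠ 0) :
    ∃ (F : Matrix (Fin m) (Fin M) ℝ) (R : Matrix (Fin M) (Fin n) ℝ),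
      l0 R ≤ s ∧ ∑ p : Fin m × Fin n, ((U0 m n ω - F * R) p.1 p.2) ^ 2 <
        (∑ p : Fin m × Fin n, (ω p) ^ 2) - ∑ p ∈ T, (ω p) ^ 2 := by
  classical
  set Φm : Matrix (Fin m) (Fin n) ℝ :=
    Matrix.of (fun i j => if (i, j) ∈ T then ω (i, j) else 0) with hΦm
  set Nm : Matrix (Fin m) (Fin n) ℝ :=
    Matrix.of (fun i j => if (i, j) ∈ T then 0 else ω (i, j)) with hNm
  set c : ℝ := ∑ j : Fin n, Nm a j * Φm k j with hcdef
  set w : ℝ := ∑ j : Fin n, (Φm k j) ^ 2 with hwdef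
  have hc : c ≠ 0 := hc0
  have hw : 0 < w := by
    have hterm : (Φm k j0) ^ 2 ≤ w :=
      Finset.single_le_sum (f := fun j => (Φm k j) ^ 2) (fun j _ => sq_nonneg _)
        (Finset.mem_univ j0)
    have : Φm k j0 = ω (k, j0) := by simp [hΦm, hkj]
    have h0 : 0 < (Φm k j0) ^ 2 := by
      rw [this]
      exact lt_of_le_of_ne (sq_nonneg _) (Ne.symm (pow_ne_zero 2 (h1 _)))
    linarith
  set δ : ℝ := c / w with hδ
  set F : Matrix (Fin m) (Fin M) ℝ := Matrix.of (fun i l =>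
    (if l = Fin.castLE hmM i then (1:ℝ) else 0) +
    (if i = a ∧ l = Fin.castLE hmM k then δ else 0)) with hF
  set R : Matrix (Fin M) (Fin n) ℝ := Matrix.of (fun l j =>
    if h : (l : ℕ) < m then Φm ⟨(l : ℕ), h⟩ j else 0) with hR
  have hRc : ∀ (i : Fin m) (j : Fin n), R (Fin.castLE hmM i) j = Φm i j := by
    intro i j
    have hlt : ((Fin.castLE hmM i : Fin M) : ℕ) < m := by simp
    simp only [hR, Matrix.of_apply]
    rw [dif_pos hlt]
    have heq : (⟨((Fin.castLE hmM i : Fin M) : ℕ), hlt⟩ : Fin m) = i := Fin.ext (by simp)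
    rw [heq]
  have hFR : ∀ i j, (F * R) i j = Φm i j + (if i = a then δ * Φm k j else 0) := by
    intro i j
    rw [Matrix.mul_apply]
    have hsplit : ∀ l : Fin M, F i l * R l j =
        (if l = Fin.castLE hmM i then R l j else 0) +
        (if i = a ∧ l = Fin.castLE hmM k then δ * R l j else 0) := by
      intro l
      simp only [hF, Matrix.of_apply, add_mul, ite_mul, one_mul, zero_mul]
    rw [Finset.sum_congr rfl fun l _ => hsplit l, Finset.sum_add_distrib]
    congr 1
    · rw [Finset.sum_ite_eq' Finset.univ (Fin.castLE hmM i) (fun l => R l j)]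
      simp [hRc]
    · by_cases h2' : i = a
      · simp only [h2', true_and]
        rw [Finset.sum_ite_eq' Finset.univ (Fin.castLE hmM k) (fun l => δ * R l j)]
        simp [hRc]
      · simp [h2']
  -- sparsity
  have hl0 : l0 R ≤ s := by
    have hsub : (Finset.univ.filter fun p : Fin M × Fin n => R p.1 p.2 ≠ 0) ⊆
        T.image (fun p : Fin m × Fin n => ((Fin.castLE hmM p.1 : Fin M), p.2)) := by
      intro p hp
      have hpne : R p.1 p.2 ≠ 0 := (Finset.mem_filter.1 hp).2
      by_cases hlt : ((p.1 : Fin M) : ℕ) < m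
      · have hval : R p.1 p.2 = Φm ⟨(p.1 : ℕ), hlt⟩ p.2 := by
          simp only [hR, Matrix.of_apply]; rw [dif_pos hlt]
        have hmem : ((⟨(p.1 : ℕ), hlt⟩ : Fin m), p.2) ∈ T := by
          by_contra hmm
          apply hpne
          rw [hval]; simp [hΦm, hmm]
        refine Finset.mem_image.2 ⟨(⟨(p.1 : ℕ), hlt⟩, p.2), hmem, ?_⟩
        ext <;> simp
      · exfalso; apply hpne
        simp only [hR, Matrix.of_apply]; rw [dif_neg hlt]
    calc l0 R ≤ (T.image _).card := Finset.card_le_card hsub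
      _ ≤ T.card := Finset.card_image_le
      _ = s := hTcard
  refine ⟨F, R, hl0, ?_⟩
  -- the squared error
  have hentry : ∀ p : Fin m × Fin n, (U0 m n ω - F * R) p.1 p.2 =
      Nm p.1 p.2 - (if p.1 = a then δ * Φm k p.2 else 0) := by
    rintro ⟨i, j⟩
    simp only [Matrix.sub_apply, hFR, U0, Matrix.of_apply]
    have : ω (i, j) = Φm i j + Nm i j := by
      simp only [hΦm, hNm, Matrix.of_apply]
      by_cases h : (i, j) ∈ T <;> simp [h]
    rw [this]; ring
  have hsq : ∑ p : Fin m × Fin n, ((U0 m n ω - F * R) p.1 p.2) ^ 2 =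
      (∑ p : Fin m × Fin n, (Nm p.1 p.2) ^ 2) - 2 * δ * c + δ ^ 2 * w := by
    have hexp : ∀ p : Fin m × Fin n, ((U0 m n ω - F * R) p.1 p.2) ^ 2 =
        (Nm p.1 p.2) ^ 2 - 2 * (Nm p.1 p.2 * (if p.1 = a then δ * Φm k p.2 else 0))
        + (if p.1 = a then δ ^ 2 * (Φm k p.2) ^ 2 else 0) := by
      rintro ⟨i, j⟩
      rw [hentry ⟨i, j⟩]
      by_cases h : i = a <;> simp [h] <;> ring
    have hBsum : ∑ p : Fin m × Fin n,
        (Nm p.1 p.2 * (if p.1 = a then δ * Φm k p.2 else 0)) = δ * c := by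
      rw [Fintype.sum_prod_type]
      rw [Finset.sum_eq_single a (fun b _ hb => by simp [hb])
        (fun h => absurd (Finset.mem_univ a) h)]
      rw [hcdef, Finset.mul_sum]
      refine Finset.sum_congr rfl fun j _ => ?_
      rw [if_pos rfl]; ring
    have hCsum : ∑ p : Fin m × Fin n,
        (if p.1 = a then δ ^ 2 * (Φm k p.2) ^ 2 else 0) = δ ^ 2 * w := by
      rw [Fintype.sum_prod_type]
      rw [Finset.sum_eq_single a (fun b _ hb => by simp [hb])
        (fun h => absurd (Finset.mem_univ a) h)]
      rw [hwdef, Finset.mul_sum]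
      refine Finset.sum_congr rfl fun j _ => ?_
      rw [if_pos rfl]
    rw [Finset.sum_congr rfl fun p _ => hexp p]
    rw [Finset.sum_add_distrib, Finset.sum_sub_distrib, ← Finset.mul_sum, hBsum, hCsum]
    ring
  have hNsum : ∑ p : Fin m × Fin n, (Nm p.1 p.2) ^ 2 =
      (∑ p : Fin m × Fin n, (ω p) ^ 2) - ∑ p ∈ T, (ω p) ^ 2 := by
    rw [← Finset.sum_sdiff (Finset.subset_univ T) (f := fun p => (ω p) ^ 2)]
    rw [← Finset.sum_sdiff (Finset.subset_univ T)
      (f := fun p : Fin m × Fin n => (Nm p.1 p.2) ^ 2)]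
    have e1 : ∑ p ∈ T, (Nm p.1 p.2) ^ 2 = 0 := by
      refine Finset.sum_eq_zero fun p hp => ?_
      simp [hNm, hp]
    have e2 : ∑ p ∈ Finset.univ \ T, (Nm p.1 p.2) ^ 2 =
        ∑ p ∈ Finset.univ \ T, (ω p) ^ 2 := by
      refine Finset.sum_congr rfl fun p hp => ?_
      have : p ∉ T := (Finset.mem_sdiff.1 hp).2
      simp [hNm, this]
    rw [e1, e2]; ring
  rw [hsq, hNsum, hδ]
  have hpos : 0 < c ^ 2 / w := by positivity
  have : 2 * (c / w) * c - (c / w) ^ 2 * w = c ^ 2 / w := by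
    field_simp; ring
  nlinarith [hpos, this]

lemma key2B (m n M s : ℕ) (hm : 1 < m) (hmM : m ≤ M) (hs0 : 0 < s) (hs : s < m * n)
    (ω : (Fin m × Fin n) → ℝ)
    (h1 : ∀ p, ω p ≠ 0)
    (T : Finset (Fin m × Fin n)) (hTcard : T.card = s)
    (hfull : ∀ (j : Fin n) (k a : Fin m), (k, j) ∈ T → (a, j) ∈ T) :
    ∃ (F : Matrix (Fin m) (Fin M) ℝ) (R : Matrix (Fin M) (Fin n) ℝ),
      l0 R ≤ s ∧ ∑ p : Fin m × Fin n, ((U0 m n ω - F * R) p.1 p.2) ^ 2 <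
        (∑ p : Fin m × Fin n, (ω p) ^ 2) - ∑ p ∈ T, (ω p) ^ 2 := by
  classical
  set C : Finset (Fin n) := T.image Prod.snd with hC
  have hTC : ∀ p : Fin m × Fin n, p ∈ T ↔ p.2 ∈ C := by
    intro p
    constructor
    · exact fun h => Finset.mem_image_of_mem Prod.snd h
    · intro hj
      obtain ⟨q, hq, hq2⟩ := Finset.mem_image.1 hj
      have : (q.1, p.2) ∈ T := by
        have : (q.1, p.2) = q := by rw [← hq2]
        rw [this]; exact hq
      exact (Prod.mk.eta (p := p)) ▸ hfull p.2 q.1 p.1 this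
  have hTprod : T = Finset.univ ×ˢ C := by
    ext p
    rw [Finset.mem_product]
    simp [hTC p]
  have hsKm : s = m * C.card := by
    rw [← hTcard, hTprod, Finset.card_product, Finset.card_univ]
    simp
  have hKpos : 0 < C.card := by
    by_contra h
    push_neg at h
    have h0 : C.card = 0 := by omega
    rw [h0, Nat.mul_zero] at hsKm
    omega
  obtain ⟨c0, hc0C⟩ := Finset.card_pos.1 hKpos
  have hTne : ∃ p1 : Fin m × Fin n, p1 ∉ T := by
    by_contra h
    push_neg at h
    have : T = Finset.univ := Finset.eq_univ_iff_forall.2 h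
    rw [this, Finset.card_univ] at hTcard
    simp at hTcard
    omega
  obtain ⟨p1, hp1⟩ := hTne
  set j1 : Fin n := p1.2 with hj1def
  have hj1 : j1 ∉ C := fun h => hp1 ((hTC p1).2 h)
  have hj1c0 : j1 ≠ c0 := fun h => hj1 (h ▸ hc0C)
  set r0 : Fin m := ⟨0, lt_trans zero_lt_one hm⟩ with hr0
  set r1 : Fin m := ⟨1, hm⟩ with hr1
  have hr10 : r1 ≠ r0 := by
    intro h
    have := Fin.mk.injEq 1 hm 0 (lt_trans zero_lt_one hm) ▸ h
    simp [hr1, hr0, Fin.ext_iff] at h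
  set q : Fin n → ℝ := fun j => ω (r0, j) / ω (r0, c0) with hq
  set F : Matrix (Fin m) (Fin M) ℝ := Matrix.of (fun i l =>
    if l = Fin.castLE hmM r0 then ω (i, c0)
    else if l = Fin.castLE hmM i then 1 else 0) with hF
  set R : Matrix (Fin M) (Fin n) ℝ := Matrix.of (fun (l : Fin M) (j : Fin n) =>
    if j ∈ C then
      (if j = c0 then (if l = Fin.castLE hmM r0 then (1:ℝ) else 0)
       else if l = Fin.castLE hmM r0 then q j
       else if h : (l : ℕ) < m then ω (⟨(l : ℕ), h⟩, j) - q j * ω (⟨(l : ℕ), h⟩, c0) else 0)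
    else if j = j1 ∧ l = Fin.castLE hmM r1 then ω (r1, j1) else 0) with hR
  -- value of the product
  have hFsplit : ∀ (i : Fin m) (l : Fin M), F i l =
      (if l = Fin.castLE hmM r0 then ω (i, c0) else 0) +
      (if i ≠ r0 ∧ l = Fin.castLE hmM i then 1 else 0) := by
    intro i l
    simp only [hF, Matrix.of_apply]
    by_cases hl : l = Fin.castLE hmM r0
    · rw [if_pos hl, if_pos hl]
      have : ¬(i ≠ r0 ∧ l = Fin.castLE hmM i) := by
        rintro ⟨hi, hli⟩
        exact hi (Fin.castLE_injective hmM (by rw [← hl, hli])).symm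
      rw [if_neg this, add_zero]
    · rw [if_neg hl, if_neg hl, zero_add]
      by_cases hli : l = Fin.castLE hmM i
      · have hir0 : i ≠ r0 := by
          intro h
          exact hl (by rw [← h, ← hli])
        rw [if_pos hli, if_pos ⟨hir0, hli⟩]
      · rw [if_neg hli, if_neg (by tauto)]
  have hsum : ∀ (i : Fin m) (j : Fin n), (F * R) i j =
      ω (i, c0) * R (Fin.castLE hmM r0) j +
      (if i ≠ r0 then R (Fin.castLE hmM i) j else 0) := by
    intro i j
    rw [Matrix.mul_apply]
    have : ∀ l : Fin M, F i l * R l j =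
        (if l = Fin.castLE hmM r0 then ω (i, c0) * R l j else 0) +
        (if i ≠ r0 ∧ l = Fin.castLE hmM i then R l j else 0) := by
      intro l
      rw [hFsplit i l, add_mul]
      congr 1
      · by_cases hl : l = Fin.castLE hmM r0 <;> simp [hl]
      · by_cases hl : i ≠ r0 ∧ l = Fin.castLE hmM i <;> simp [hl]
    rw [Finset.sum_congr rfl fun l _ => this l, Finset.sum_add_distrib]
    congr 1
    · rw [Finset.sum_ite_eq' Finset.univ (Fin.castLE hmM r0)
        (fun l => ω (i, c0) * R l j)]
      simp
    · by_cases hi : i ≠ r0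
      · rw [if_pos hi]
        have hh : ∀ l : Fin M, (if i ≠ r0 ∧ l = Fin.castLE hmM i then R l j else 0)
            = (if l = Fin.castLE hmM i then R l j else 0) := fun l => by simp [hi]
        rw [Finset.sum_congr rfl fun l _ => hh l,
          Finset.sum_ite_eq' Finset.univ (Fin.castLE hmM i) (fun l => R l j)]
        simp
      · rw [if_neg hi]
        have hh : ∀ l : Fin M, (if i ≠ r0 ∧ l = Fin.castLE hmM i then R l j else 0)
            = 0 := fun l => by simp [hi]
        rw [Finset.sum_congr rfl fun l _ => hh l, Finset.sum_const_zero]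
  -- values of R at relevant rows
  have hcast_ne : Fin.castLE hmM r1 ≠ Fin.castLE hmM r0 := by
    simp [Fin.castLE_inj]; exact hr10
  have hR0 : ∀ j : Fin n, R (Fin.castLE hmM r0) j =
      if j ∈ C then (if j = c0 then 1 else q j) else 0 := by
    intro j
    simp only [hR, Matrix.of_apply]
    by_cases hjC : j ∈ C
    · by_cases hjc : j = c0 <;> simp [hjC, hjc, hc0C]
    · simp [hjC, Ne.symm hcast_ne]
  have hRi : ∀ (i : Fin m) (j : Fin n), i ≠ r0 → R (Fin.castLE hmM i) j =
      if j ∈ C then (if j = c0 then 0 else ω (i, j) - q j * ω (i, c0))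
      else (if j = j1 ∧ i = r1 then ω (r1, j1) else 0) := by
    intro i j hi
    have hine : Fin.castLE hmM i ≠ Fin.castLE hmM r0 := by
      simp [Fin.castLE_inj]; exact hi
    have hlt : ((Fin.castLE hmM i : Fin M) : ℕ) < m := by simp
    have heta : (⟨((Fin.castLE hmM i : Fin M) : ℕ), hlt⟩ : Fin m) = i := Fin.ext (by simp)
    simp only [hR, Matrix.of_apply]
    by_cases hjC : j ∈ C
    · by_cases hjc : j = c0
      · simp [hjC, hjc, hine]
      · rw [if_pos hjC, if_neg hjc, if_neg hine, dif_pos hlt, heta]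
        simp [hjC, hjc]
    · rw [if_neg hjC]
      by_cases hj : j = j1
      · by_cases hir : i = r1
        · simp [hj, hir, hj1]
        · have : ¬ (Fin.castLE hmM i = Fin.castLE hmM r1) := by
            simp [Fin.castLE_inj]; exact hir
          simp [hj, hir, this, hj1]
      · simp [hj, hjC]
  have hFR : ∀ (i : Fin m) (j : Fin n), (F * R) i j =
      if j ∈ C then ω (i, j) else (if j = j1 ∧ i = r1 then ω (i, j) else 0) := by
    intro i j
    rw [hsum i j, hR0 j]
    by_cases hi : i = r0
    · subst hi
      simp only [ne_eq, not_true_eq_false, if_false, add_zero]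
      by_cases hjC : j ∈ C
      · by_cases hjc : j = c0
        · simp [hjC, hjc, hc0C]
        · simp only [hjC, if_true, hjc, if_false, hq]
          rw [← mul_div_assoc]
          exact mul_div_cancel_left₀ _ (h1 (r0, c0))
      · -- j ∉ C : r0 ≠ r1 so result 0
        have : ¬ (j = j1 ∧ r0 = r1) := by
          rintro ⟨-, h⟩; exact hr10 h.symm
        simp [hjC, this]
    · rw [hRi i j hi]
      simp only [ne_eq, hi, not_false_eq_true, if_true]
      by_cases hjC : j ∈ C
      · by_cases hjc : j = c0
        · simp [hjC, hjc, hc0C]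
        · simp only [hjC, if_true, hjc, if_false]
          ring
      · by_cases hj : j = j1 ∧ i = r1
        · obtain ⟨h1', h2'⟩ := hj
          simp [hjC, h1', h2', hj1]
        · simp [hjC, hj]
  -- sparsity
  have hl0 : l0 R ≤ s := by
    set S1 : Finset (Fin M × Fin n) :=
      (Finset.univ.image (Fin.castLE hmM)) ×ˢ (C.erase c0) with hS1
    set S2 : Finset (Fin M × Fin n) :=
      {(Fin.castLE hmM r0, c0), (Fin.castLE hmM r1, j1)} with hS2
    have hsub : (Finset.univ.filter fun p : Fin M × Fin n => R p.1 p.2 ≠ 0) ⊆ S1 ∪ S2 := by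
      rintro ⟨l, j⟩ hp
      have hpne : R l j ≠ 0 := (Finset.mem_filter.1 hp).2
      simp only [hR, Matrix.of_apply] at hpne
      rw [Finset.mem_union]
      by_cases hjC : j ∈ C
      · by_cases hjc : j = c0
        · right
          rw [if_pos hjC, if_pos hjc] at hpne
          by_cases hl : l = Fin.castLE hmM r0
          · rw [hS2]; simp [hl, hjc]
          · rw [if_neg hl] at hpne
            exact absurd rfl hpne
        · -- j ∈ C, j ≠ c0 : l must have val < m
          left
          rw [hS1, Finset.mem_product]
          refine ⟨?_, Finset.mem_erase.2 ⟨hjc, hjC⟩⟩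
          rw [if_pos hjC, if_neg hjc] at hpne
          by_cases hl : l = Fin.castLE hmM r0
          · exact Finset.mem_image.2 ⟨r0, Finset.mem_univ _, hl.symm⟩
          · rw [if_neg hl] at hpne
            by_cases hlt : (l : ℕ) < m
            · refine Finset.mem_image.2 ⟨⟨(l : ℕ), hlt⟩, Finset.mem_univ _, ?_⟩
              exact Fin.ext (by simp)
            · rw [dif_neg hlt] at hpne
              exact absurd rfl hpne
      · right
        rw [if_neg hjC] at hpne
        by_cases hcond : j = j1 ∧ l = Fin.castLE hmM r1
        · rw [hS2]
          simp [hcond.1, hcond.2]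
        · rw [if_neg hcond] at hpne
          exact absurd rfl hpne
    have hcard1 : S1.card = m * (C.card - 1) := by
      rw [hS1, Finset.card_product, Finset.card_image_of_injective _ (Fin.castLE_injective hmM),
        Finset.card_univ, Finset.card_erase_of_mem hc0C]
      simp
    have hcard2 : S2.card ≤ 2 := by
      rw [hS2]
      apply le_trans (Finset.card_insert_le _ _)
      simp
    calc l0 R ≤ (S1 ∪ S2).card := Finset.card_le_card hsub
      _ ≤ S1.card + S2.card := Finset.card_union_le _ _
      _ ≤ m * (C.card - 1) + 2 := by rw [hcard1]; omega
      _ ≤ m * (C.card - 1) + m := by omega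
      _ = m * C.card := by
          have e : C.card - 1 + 1 = C.card := Nat.sub_add_cancel hKpos
          calc m * (C.card - 1) + m = m * (C.card - 1 + 1) := by ring
            _ = m * C.card := by rw [e]
      _ = s := hsKm.symm
  refine ⟨F, R, hl0, ?_⟩
  -- squared error
  have hterm : ∀ p : Fin m × Fin n, ((U0 m n ω - F * R) p.1 p.2) ^ 2 =
      if p ∈ T then 0 else (if p = (r1, j1) then 0 else (ω p) ^ 2) := by
    rintro ⟨i, j⟩
    have hxy : (U0 m n ω - F * R) i j = ω (i, j) - (F * R) i j := rfl
    rw [hxy, hFR i j]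
    by_cases hjC : j ∈ C
    · have hT : (i, j) ∈ T := (hTC (i, j)).2 hjC
      simp [hT, hjC]
    · have hT : (i, j) ∉ T := fun h => hjC ((hTC (i, j)).1 h)
      by_cases hcond : (i, j) = (r1, j1)
      · have h1' : j = j1 := congrArg Prod.snd hcond
        have h2' : i = r1 := congrArg Prod.fst hcond
        simp [hT, hjC, hcond, h1', h2']
      · have : ¬ (j = j1 ∧ i = r1) := by
          rintro ⟨ha, hb⟩
          exact hcond (by rw [ha, hb])
        simp [hT, hjC, this, hcond]
  rw [Finset.sum_congr rfl fun p _ => hterm p]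
  rw [← Finset.sum_sdiff (Finset.subset_univ T)]
  have e1 : ∑ p ∈ T, (if p ∈ T then (0:ℝ) else (if p = (r1, j1) then 0 else (ω p) ^ 2)) = 0 :=
    Finset.sum_eq_zero fun p hp => by simp [hp]
  have hmemA : (r1, j1) ∈ Finset.univ \ T := by
    rw [Finset.mem_sdiff]
    exact ⟨Finset.mem_univ _, fun h => hj1 ((hTC (r1, j1)).1 h)⟩
  have e2 : ∑ p ∈ Finset.univ \ T,
      (if p ∈ T then (0:ℝ) else (if p = (r1, j1) then 0 else (ω p) ^ 2)) =
      (∑ p ∈ Finset.univ \ T, (ω p) ^ 2) - ω (r1, j1) ^ 2 := by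
    have congr1 : ∑ p ∈ Finset.univ \ T,
        (if p ∈ T then (0:ℝ) else (if p = (r1, j1) then 0 else (ω p) ^ 2)) =
        ∑ p ∈ Finset.univ \ T, (if p = (r1, j1) then 0 else (ω p) ^ 2) := by
      refine Finset.sum_congr rfl fun p hp => ?_
      rw [if_neg (Finset.mem_sdiff.1 hp).2]
    rw [congr1]
    rw [← Finset.add_sum_erase _ _ hmemA, if_pos rfl, zero_add]
    rw [← Finset.add_sum_erase _ (fun p => (ω p) ^ 2) hmemA]
    have : ∑ p ∈ (Finset.univ \ T).erase (r1, j1),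
        (if p = (r1, j1) then (0:ℝ) else (ω p) ^ 2) =
        ∑ p ∈ (Finset.univ \ T).erase (r1, j1), (ω p) ^ 2 := by
      refine Finset.sum_congr rfl fun p hp => ?_
      rw [if_neg (Finset.mem_erase.1 hp).1]
    rw [this]; ring
  rw [e1, e2, add_zero]
  have hsdiff : ∑ p ∈ Finset.univ \ T, (ω p) ^ 2 =
      (∑ p : Fin m × Fin n, (ω p) ^ 2) - ∑ p ∈ T, (ω p) ^ 2 := by
    have := Finset.sum_sdiff (Finset.subset_univ T) (f := fun p => (ω p) ^ 2)
    linarith [this]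
  rw [hsdiff]
  have : 0 < ω (r1, j1) ^ 2 :=
    lt_of_le_of_ne (sq_nonneg _) (Ne.symm (pow_ne_zero 2 (h1 _)))
  linarith

lemma frob_eq {m n : ℕ} (A : Matrix (Fin m) (Fin n) ℝ) :
    frobNorm A = Real.sqrt (∑ p : Fin m × Fin n, (A p.1 p.2) ^ 2) := by
  rw [frobNorm, Fintype.sum_prod_type]


lemma det_lemma (m n M s : ℕ) (hm : 1 < m) (hmM : m ≤ M) (hs0 : 0 < s) (hs : s < m * n)
    (ω : (Fin m × Fin n) → ℝ)
    (h1 : ∀ p, ω p ≠ 0)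
    (h2 : ∀ T : Finset (Fin m × Fin n), ∀ a k : Fin m, ∀ j0 : Fin n,
      (a, j0) ∉ T → (k, j0) ∈ T →
      (∑ j : Fin n, (if (a, j) ∈ T then (0:ℝ) else ω (a, j)) *
        (if (k, j) ∈ T then ω (k, j) else 0)) ≠ 0) :
    sInf {e : ℝ | ∃ (F : Matrix (Fin m) (Fin M) ℝ) (R : Matrix (Fin M) (Fin n) ℝ),
        l0 R ≤ s ∧ e = frobNorm (U0 m n ω - F * R)} <
    sInf {e : ℝ | ∃ Φ : Matrix (Fin m) (Fin n) ℝ,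
        l0 Φ ≤ s ∧ e = frobNorm (U0 m n ω - Φ)} := by
  classical
  set Q : Finset (Fin m × Fin n) → ℝ := fun T => ∑ p ∈ T, (ω p) ^ 2 with hQ
  set Total : ℝ := ∑ p : Fin m × Fin n, (ω p) ^ 2 with hTotal
  have hsle : s ≤ (Finset.univ : Finset (Fin m × Fin n)).card := by
    rw [Finset.card_univ]; simp; omega
  -- maximizing support
  have hne : ((Finset.univ : Finset (Fin m × Fin n)).powersetCard s).Nonempty := by
    rw [Finset.powersetCard_nonempty]; exact hsle
  obtain ⟨T, hTmem, hTmax⟩ := Finset.exists_max_image _ Q hne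
  obtain ⟨-, hTcard⟩ := Finset.mem_powersetCard.1 hTmem
  set D : ℝ := Total - Q T with hD
  -- lower bound for any sparse Φ
  have key1 : ∀ Φ : Matrix (Fin m) (Fin n) ℝ, l0 Φ ≤ s →
      D ≤ ∑ p : Fin m × Fin n, ((U0 m n ω - Φ) p.1 p.2) ^ 2 := by
    intro Φ hΦ
    set S := Finset.univ.filter fun p : Fin m × Fin n => Φ p.1 p.2 ≠ 0 with hSdef
    obtain ⟨S', hSS', -, hS'card⟩ :=
      Finset.exists_subsuperset_card_eq (Finset.subset_univ S) hΦ hsle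
    have hQle : Q S' ≤ Q T := hTmax S' (Finset.mem_powersetCard.2 ⟨Finset.subset_univ _, hS'card⟩)
    have step1 : ∑ p ∈ Finset.univ \ S', ((U0 m n ω - Φ) p.1 p.2) ^ 2
        ≤ ∑ p : Fin m × Fin n, ((U0 m n ω - Φ) p.1 p.2) ^ 2 :=
      Finset.sum_le_sum_of_subset_of_nonneg (Finset.sdiff_subset)
        (fun p _ _ => sq_nonneg _)
    have step2 : ∑ p ∈ Finset.univ \ S', ((U0 m n ω - Φ) p.1 p.2) ^ 2
        = ∑ p ∈ Finset.univ \ S', (ω p) ^ 2 := by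
      refine Finset.sum_congr rfl fun p hp => ?_
      have hpS : p ∉ S := fun h => (Finset.mem_sdiff.1 hp).2 (hSS' h)
      have hΦ0 : Φ p.1 p.2 = 0 := by
        by_contra h
        exact hpS (Finset.mem_filter.2 ⟨Finset.mem_univ _, h⟩)
      simp [Matrix.sub_apply, U0, hΦ0]
    have step3 : ∑ p ∈ Finset.univ \ S', (ω p) ^ 2 = Total - Q S' := by
      have := Finset.sum_sdiff (Finset.subset_univ S') (f := fun p => (ω p) ^ 2)
      rw [hTotal, hQ]; linarith [this]
    calc D ≤ Total - Q S' := by rw [hD]; linarith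
      _ = ∑ p ∈ Finset.univ \ S', ((U0 m n ω - Φ) p.1 p.2) ^ 2 := by rw [step2, step3]
      _ ≤ _ := step1
  -- the construction
  have key2 : ∃ (F : Matrix (Fin m) (Fin M) ℝ) (R : Matrix (Fin M) (Fin n) ℝ),
      l0 R ≤ s ∧ ∑ p : Fin m × Fin n, ((U0 m n ω - F * R) p.1 p.2) ^ 2 < D := by
    have hDval : D = (∑ p : Fin m × Fin n, (ω p) ^ 2) - ∑ p ∈ T, (ω p) ^ 2 := rfl
    rw [hDval]
    by_cases hA : ∃ (a k : Fin m) (j : Fin n), (a, j) ∉ T ∧ (k, j) ∈ T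
    · obtain ⟨a, k, j, haj, hkj⟩ := hA
      exact key2A m n M s hm hmM hs0 hs ω h1 T hTcard a k j haj hkj
        (h2 T a k j haj hkj)
    · push_neg at hA
      refine key2B m n M s hm hmM hs0 hs ω h1 T hTcard ?_
      intro j k a hkj
      by_contra haj
      exact hA a k j haj hkj
  -- conclude
  obtain ⟨F, R, hRl0, hlt⟩ := key2
  have hmem : frobNorm (U0 m n ω - F * R) ∈ {e : ℝ | ∃ (F : Matrix (Fin m) (Fin M) ℝ)
      (R : Matrix (Fin M) (Fin n) ℝ), l0 R ≤ s ∧ e = frobNorm (U0 m n ω - F * R)} :=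
    ⟨F, R, hRl0, rfl⟩
  have hbdd : BddBelow {e : ℝ | ∃ (F : Matrix (Fin m) (Fin M) ℝ)
      (R : Matrix (Fin M) (Fin n) ℝ), l0 R ≤ s ∧ e = frobNorm (U0 m n ω - F * R)} := by
    refine ⟨0, fun e he => ?_⟩
    obtain ⟨F', R', -, rfl⟩ := he
    exact Real.sqrt_nonneg _
  have hub := csInf_le hbdd hmem
  have hlow : Real.sqrt D ≤ sInf {e : ℝ | ∃ Φ : Matrix (Fin m) (Fin n) ℝ,
      l0 Φ ≤ s ∧ e = frobNorm (U0 m n ω - Φ)} := by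
    refine le_csInf ⟨frobNorm (U0 m n ω - 0), 0, by simp [l0], rfl⟩ ?_
    rintro e ⟨Φ, hΦ, rfl⟩
    rw [frob_eq]
    exact Real.sqrt_le_sqrt (key1 Φ hΦ)
  have hstrict : frobNorm (U0 m n ω - F * R) < Real.sqrt D := by
    rw [frob_eq]
    exact Real.sqrt_lt_sqrt (Finset.sum_nonneg fun p _ => sq_nonneg _) hlt
  calc sInf _ ≤ frobNorm (U0 m n ω - F * R) := hub
    _ < Real.sqrt D := hstrict
    _ ≤ _ := hlow


theorem stmt0 (m n M s : ℕ) (hm : 1 < m) (hmM : m ≤ M) (hs0 : 0 < s) (hs : s < m * n) :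
    (Measure.pi fun _ : Fin m × Fin n => gaussianReal 0 1)
      {ω : (Fin m × Fin n) → ℝ |
        sInf {e : ℝ | ∃ (F : Matrix (Fin m) (Fin M) ℝ) (R : Matrix (Fin M) (Fin n) ℝ),
            l0 R ≤ s ∧ e = frobNorm (U0 m n ω - F * R)} <
        sInf {e : ℝ | ∃ Φ : Matrix (Fin m) (Fin n) ℝ,
            l0 Φ ≤ s ∧ e = frobNorm (U0 m n ω - Φ)}} = 1 := by
  classical
  set μ := Measure.pi fun _ : Fin m × Fin n => gaussianReal 0 1 with hμ
  set Target : Set ((Fin m × Fin n) → ℝ) :=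
    {ω : (Fin m × Fin n) → ℝ |
        sInf {e : ℝ | ∃ (F : Matrix (Fin m) (Fin M) ℝ) (R : Matrix (Fin M) (Fin n) ℝ),
            l0 R ≤ s ∧ e = frobNorm (U0 m n ω - F * R)} <
        sInf {e : ℝ | ∃ Φ : Matrix (Fin m) (Fin n) ℝ,
            l0 Φ ≤ s ∧ e = frobNorm (U0 m n ω - Φ)}} with hTargetDef
  set Bad : Set ((Fin m × Fin n) → ℝ) :=
    (⋃ p : Fin m × Fin n, {ω : (Fin m × Fin n) → ℝ | ω p = 0}) ∪
    (⋃ T : Finset (Fin m × Fin n), ⋃ a : Fin m, ⋃ k : Fin m, ⋃ j0 : Fin n,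
      ⋃ (_ : (a, j0) ∉ T ∧ (k, j0) ∈ T),
      {ω : (Fin m × Fin n) → ℝ | (∑ j : Fin n,
        (if (a, j) ∈ T then (0:ℝ) else ω (a, j)) *
        (if (k, j) ∈ T then ω (k, j) else 0)) = 0}) with hBadDef
  have hBadNull : μ Bad = 0 := by
    rw [hBadDef]
    apply measure_union_null
    · exact measure_iUnion_null fun p => pi_eval_null p 0
    · refine measure_iUnion_null fun T => measure_iUnion_null fun a =>
        measure_iUnion_null fun k => measure_iUnion_null fun j0 =>
        measure_iUnion_null fun hcond => ?_
      exact null_poly T a k j0 hcond.1 hcond.2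
  have hBadMeas : MeasurableSet Bad := by
    rw [hBadDef]
    apply MeasurableSet.union
    · refine MeasurableSet.iUnion fun p => ?_
      exact (measurable_pi_apply p) (measurableSet_singleton 0)
    · refine MeasurableSet.iUnion fun T => MeasurableSet.iUnion fun a =>
        MeasurableSet.iUnion fun k => MeasurableSet.iUnion fun j0 =>
        MeasurableSet.iUnion fun hcond => ?_
      have hmeas : Measurable fun ω : (Fin m × Fin n) → ℝ => ∑ j : Fin n,
          (if (a, j) ∈ T then (0:ℝ) else ω (a, j)) *
          (if (k, j) ∈ T then ω (k, j) else 0) := by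
        apply Finset.measurable_sum
        intro j _
        by_cases hh1 : (a, j) ∈ T <;> by_cases hh2 : (k, j) ∈ T <;>
          simp only [hh1, hh2, if_true, if_false] <;> fun_prop
      exact hmeas (measurableSet_singleton 0)
  have hsub : Badᶜ ⊆ Target := by
    intro ω hω
    rw [hBadDef] at hω
    simp only [Set.mem_compl_iff, Set.mem_union, not_or, Set.mem_iUnion,
      Set.mem_setOf_eq, not_exists] at hω
    obtain ⟨hω1, hω2⟩ := hω
    refine det_lemma m n M s hm hmM hs0 hs ω (fun p => hω1 p) ?_
    intro T a k j0 haj hkj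
    exact hω2 T a k j0 ⟨haj, hkj⟩
  have hprob : IsProbabilityMeasure μ := by
    rw [hμ]; infer_instance
  have hcompl : μ Badᶜ = 1 := by
    rw [measure_compl hBadMeas (measure_ne_top μ Bad), hBadNull, measure_univ]
    simp
  refine le_antisymm prob_le_one ?_
  calc (1 : ENNReal) = μ Badᶜ := hcompl.symm
    _ ≤ μ Target := measure_mono hsub
end

section
/- Let m ≤ M, U ∈ ℝ^{m×n}, 0 ≤ s ≤ m·n, and let Φ* minimize ‖U − Φ‖_F over all Φ ∈ ℝ^{m×n} with ‖Φ‖₀ ≤ s. Let ε₁ = inf over all F ∈ ℝ^{m×M} and R ∈ ℝ^{M×n} with ‖R‖₀ ≤ s of ‖U − F·R‖_F and ε₂ = ‖U − Φ*‖_F. If ε₁ = ε₂, then (U − Φ*)·(Φ*)ᵀ = 0. -/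
open Matrix

/-! Since `m ≤ M`, padding `Φ*` and `Gᵀ` with zero rows writes every product `G * Φ*`
(`G` square) as `F * R` with `‖R‖₀ = ‖Φ*‖₀`, so `ε₁ = ε₂` makes `Φ*` at least as good as every
`G * Φ*`. Taking `G = 1 + t • D` with `D = (U - Φ*) * Φ*ᵀ` changes the squared error by
`-2t‖D‖²_F + O(t²)`, which forces `D = 0`. -/

theorem Real.nonpos_of_forall_pos_le_mul {a b : ℝ} (h : ∀ t > 0, a ≤ t * b) : a ≤ 0 := by
  by_contra! ha
  have hb : 0 < b := by linarith [h 1 one_pos]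
  have := h (a / (2 * b)) (by positivity)
  rw [div_mul_eq_mul_div, mul_div_mul_right a 2 hb.ne'] at this
  linarith

namespace Matrix

variable {ι κ ν R : Type*}

noncomputable def extendRows [Zero R] (e : ι → κ) (A : Matrix ι ν R) : Matrix κ ν R :=
  of fun j k => Function.extend e (fun i => A i k) 0 j

variable {e : ι → κ}

theorem extendRows_apply_self [Zero R] (he : e.Injective) (A : Matrix ι ν R) (i : ι) (k : ν) :
    extendRows e A (e i) k = A i k :=
  he.extend_apply (fun i => A i k) 0 i

theorem extendRows_apply_of_notMem_range [Zero R] (A : Matrix ι ν R) {j : κ}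
    (hj : j ∉ Set.range e) (k : ν) : extendRows e A j k = 0 :=
  Function.extend_apply' (fun i => A i k) (0 : κ → R) j hj

theorem transpose_extendRows_mul_extendRows [Fintype ι] [Fintype κ] [NonUnitalNonAssocSemiring R]
    {μ : Type*} (he : e.Injective) (G : Matrix μ ι R) (A : Matrix ι ν R) :
    (extendRows e Gᵀ)ᵀ * extendRows e A = G * A := by
  ext i k
  refine (Fintype.sum_of_injective e he _ _ (fun j hj => ?_) fun j => ?_).symm
  · simp [extendRows_apply_of_notMem_range _ hj]
  · simp [extendRows_apply_self he]

theorem trace_mul_transpose_self [Fintype ι] [Fintype κ] [Semiring R] (A : Matrix κ ι R) :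
    trace (A * Aᵀ) = ∑ i, ∑ j, A i j ^ 2 := by
  simp [trace, mul_apply, sq]

theorem trace_sub_smul_mul_transpose [Fintype ι] [Fintype κ] [CommRing R] (A B : Matrix κ ι R)
    (t : R) :
    trace ((A - t • B) * (A - t • B)ᵀ)
      = trace (A * Aᵀ) - 2 * t * trace (A * Bᵀ) + t ^ 2 * trace (B * Bᵀ) := by
  have hBA : trace (B * Aᵀ) = trace (A * Bᵀ) := by
    rw [← trace_transpose, transpose_mul, transpose_transpose]
  simp only [transpose_sub, transpose_smul, Matrix.sub_mul, Matrix.mul_sub, Matrix.smul_mul,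
    Matrix.mul_smul, trace_sub, trace_smul, hBA, smul_eq_mul]
  ring

end Matrix

theorem l0_extendRows {m M n : ℕ} {e : Fin m → Fin M} (he : e.Injective)
    (A : Matrix (Fin m) (Fin n) ℝ) : l0 (A.extendRows e) = l0 A := by
  rw [l0, l0, ← Finset.card_image_of_injective _ (he.prodMap Function.injective_id)]
  congr 1
  ext ⟨j, k⟩
  simp only [Finset.mem_filter, Finset.mem_univ, true_and, Finset.mem_image, Prod.map,
    Prod.mk.injEq, id, Prod.exists]
  by_cases hj : j ∈ Set.range e
  · obtain ⟨i, rfl⟩ := hj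
    simp [extendRows_apply_self he, he.eq_iff]
  · rw [extendRows_apply_of_notMem_range _ hj]
    simp_all

theorem frobNorm_le_frobNorm_iff {m n : ℕ} {A B : Matrix (Fin m) (Fin n) ℝ} :
    frobNorm A ≤ frobNorm B ↔ trace (A * Aᵀ) ≤ trace (B * Bᵀ) := by
  rw [frobNorm, frobNorm, Real.sqrt_le_sqrt_iff (by positivity), trace_mul_transpose_self,
    trace_mul_transpose_self]

theorem sInf_frobNorm_sub_mul_le {m M n s : ℕ} (hmM : m ≤ M) (U Φ : Matrix (Fin m) (Fin n) ℝ)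
    (hΦ : l0 Φ ≤ s) (G : Matrix (Fin m) (Fin m) ℝ) :
    sInf {e : ℝ | ∃ (F : Matrix (Fin m) (Fin M) ℝ) (R : Matrix (Fin M) (Fin n) ℝ),
      l0 R ≤ s ∧ e = frobNorm (U - F * R)} ≤ frobNorm (U - G * Φ) := by
  have he := Fin.castLE_injective hmM
  refine csInf_le ⟨0, ?_⟩ ⟨(Gᵀ.extendRows (Fin.castLE hmM))ᵀ, Φ.extendRows (Fin.castLE hmM),
    (l0_extendRows he Φ).le.trans hΦ, by rw [transpose_extendRows_mul_extendRows he]⟩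
  rintro _ ⟨F, R, -, rfl⟩
  exact Real.sqrt_nonneg _

theorem mul_transpose_eq_zero_of_forall_frobNorm_le {m n : ℕ} {U Φ : Matrix (Fin m) (Fin n) ℝ}
    (h : ∀ G : Matrix (Fin m) (Fin m) ℝ, frobNorm (U - Φ) ≤ frobNorm (U - G * Φ)) :
    (U - Φ) * Φᵀ = 0 := by
  set D := (U - Φ) * Φᵀ
  have hcross : trace ((U - Φ) * (D * Φ)ᵀ) = trace (D * Dᵀ) := by
    rw [transpose_mul, ← Matrix.mul_assoc]
  have hdescent : ∀ t > 0, trace (D * Dᵀ) ≤ t * (trace ((D * Φ) * (D * Φ)ᵀ) / 2) := by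
    intro t ht
    have h1 := frobNorm_le_frobNorm_iff.1 (h (1 + t • D))
    rw [show U - (1 + t • D) * Φ = (U - Φ) - t • (D * Φ) by
      rw [Matrix.add_mul, Matrix.one_mul, Matrix.smul_mul]; abel,
      trace_sub_smul_mul_transpose, hcross] at h1
    nlinarith
  have hD : trace (D * Dᵀ) = 0 :=
    le_antisymm (Real.nonpos_of_forall_pos_le_mul hdescent)
      (by rw [trace_mul_transpose_self]; positivity)
  exact trace_mul_conjTranspose_self_eq_zero_iff.1
    (by rwa [conjTranspose_eq_transpose_of_trivial])

theorem stmt10_general (m M n s : ℕ) (hmM : m ≤ M)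
    (U Φstar : Matrix (Fin m) (Fin n) ℝ)
    -- `Φstar` minimizes `‖U - Φ‖_F` over matrices with at most `s` nonzero entries:
    (hΦcard : l0 Φstar ≤ s)
    -- ε₁ = ε₂ :
    (heq : sInf {e : ℝ | ∃ (F : Matrix (Fin m) (Fin M) ℝ) (R : Matrix (Fin M) (Fin n) ℝ),
        l0 R ≤ s ∧ e = frobNorm (U - F * R)} = frobNorm (U - Φstar)) :
    (U - Φstar) * Φstarᵀ = 0 :=
  mul_transpose_eq_zero_of_forall_frobNorm_le fun G =>
    heq ▸ sInf_frobNorm_sub_mul_le hmM U Φstar hΦcard G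

theorem stmt10 (m M n s : ℕ) (hmM : m ≤ M) (hs : s ≤ m * n)
    (U Φstar : Matrix (Fin m) (Fin n) ℝ)
    -- `Φstar` minimizes `‖U - Φ‖_F` over matrices with at most `s` nonzero entries:
    (hΦcard : l0 Φstar ≤ s)
    (hΦmin : ∀ Φ : Matrix (Fin m) (Fin n) ℝ, l0 Φ ≤ s →
      frobNorm (U - Φstar) ≤ frobNorm (U - Φ))
    -- ε₁ = ε₂ :
    (heq : sInf {e : ℝ | ∃ (F : Matrix (Fin m) (Fin M) ℝ) (R : Matrix (Fin M) (Fin n) ℝ),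
        l0 R ≤ s ∧ e = frobNorm (U - F * R)} = frobNorm (U - Φstar)) :
    (U - Φstar) * Φstarᵀ = 0 :=
  stmt10_general m M n s hmM U Φstar hΦcard heq
end
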